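/- Let X be a topological space, R = Clop(X) its Boolean ring of clopens, and f : π₀(X) → Spec(R) the map sending the connected component [x] of a point x to the prime ideal {A ∈ Clop(X) : x ∉ A}. Then: (i) f is well-defined and continuous; (ii) f is injective if and only if every quasi-component of X is connected; (iii) if X is quasi-compact, f is surjective and a closed map. -/

import Mathlib

/-!
The point `x` is sent to the prime of clopens avoiding it. The preimage of the basic open `D(A)`
is `A` itself, so `X → Spec Clop(X)` is continuous; and `Spec` of a Boolean ring is totally
separated, as each `D(e)` is clopen with complement `D(1 + e)`. Hence the map factors continuously
through `π₀(X)`. Two points have the same image exactly when no clopen separates them, i.e. when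
they lie in the same quasi-component, so injectivity says that quasi-components are components.
If `X` is compact then so is `π₀(X)`, and a continuous map to a Hausdorff space is closed; its
image is also dense, because a nonzero clopen contains a point, so it is surjective.
-/

open TopologicalSpace

namespace PrimeSpectrum

variable {R : Type*} [BooleanRing R]

theorem isClopen_basicOpen_of_booleanRing (e : R) :
    IsClopen (basicOpen e : Set (PrimeSpectrum R)) :=
  isClopen_basicOpen_of_mul_add e (1 + e)
    (by rw [mul_add, mul_one, BooleanRing.mul_self, BooleanRing.add_self])
    (by rw [add_left_comm, BooleanRing.add_self, add_zero])

instance totallySeparatedSpace_of_booleanRing : TotallySeparatedSpace (PrimeSpectrum R) :=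
  totallySeparatedSpace_of_t0_of_basis_clopen <|
    isTopologicalBasis_basic_opens.of_isOpen_of_subset (fun _ h ↦ h.isOpen) <| by
      rintro _ ⟨e, rfl⟩
      exact isClopen_basicOpen_of_booleanRing e

end PrimeSpectrum

section QuasiComponent

variable {X : Type*} [TopologicalSpace X]

def quasiComponent (x : X) : Set X :=
  ⋂₀ {A : Set X | IsClopen A ∧ x ∈ A}

theorem mem_quasiComponent {x y : X} :
    y ∈ quasiComponent x ↔ ∀ A : Clopens X, x ∈ A → y ∈ A :=
  ⟨fun h A hA ↦ h A ⟨A.isClopen, hA⟩, fun h A hA ↦ h ⟨A, hA.1⟩ hA.2⟩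

theorem mem_quasiComponent_self (x : X) : x ∈ quasiComponent x :=
  mem_quasiComponent.mpr fun _ ↦ id

theorem connectedComponent_subset_quasiComponent (x : X) :
    connectedComponent x ⊆ quasiComponent x := fun _ hy ↦
  mem_quasiComponent.mpr fun A hA ↦ A.isClopen.connectedComponent_subset hA hy

theorem quasiComponent_subset_connectedComponent_iff {x : X} :
    quasiComponent x ⊆ connectedComponent x ↔ IsConnected (quasiComponent x) := by
  refine ⟨fun h ↦ ?_,
    fun h ↦ h.isPreconnected.subset_connectedComponent (mem_quasiComponent_self x)⟩
  rw [h.antisymm (connectedComponent_subset_quasiComponent x)]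
  exact isConnected_connectedComponent

theorem mem_quasiComponent_iff_forall_mem_iff {x y : X} :
    y ∈ quasiComponent x ↔ ∀ A : Clopens X, x ∈ A ↔ y ∈ A := by
  refine ⟨fun h A ↦ ⟨mem_quasiComponent.mp h A, fun hy ↦ ?_⟩,
    fun h ↦ mem_quasiComponent.mpr fun A ↦ (h A).mp⟩
  by_contra hx
  exact mem_quasiComponent.mp h Aᶜ hx hy

end QuasiComponent

theorem Continuous.injective_connectedComponentsLift_iff {X Y : Type*} [TopologicalSpace X]
    [TopologicalSpace Y] [TotallyDisconnectedSpace Y] {f : X → Y} (hf : Continuous f) :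
    Function.Injective hf.connectedComponentsLift ↔
      ∀ x y, f x = f y → y ∈ connectedComponent x := by
  simp only [Function.Injective, ConnectedComponents.surjective_coe.forall,
    hf.connectedComponentsLift_apply_coe, ConnectedComponents.coe_eq_coe']
  exact forall_comm.trans (forall₂_congr fun _ _ ↦ by rw [eq_comm])

namespace TopologicalSpace.Clopens

variable {X : Type*} [TopologicalSpace X]

def pointIdeal (x : X) : Ideal (AsBoolRing (Clopens X)) where
  carrier := {A | x ∉ ofBoolRing A}
  zero_mem' := by simp [← SetLike.mem_coe]
  add_mem' {A B} hA hB := by simp_all [symmDiff_def, ← SetLike.mem_coe]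
  smul_mem' _ _ hA := by simp_all [← SetLike.mem_coe]

theorem mem_pointIdeal {x : X} {A : AsBoolRing (Clopens X)} :
    A ∈ pointIdeal x ↔ x ∉ ofBoolRing A := Iff.rfl

instance isPrime_pointIdeal (x : X) : (pointIdeal x).IsPrime := by
  refine Ideal.isPrime_iff.mpr ⟨(Ideal.ne_top_iff_one _).mpr ?_, fun {A B} ↦ ?_⟩
  · rw [mem_pointIdeal, ofBoolRing_one, not_not]
    trivial
  · simp only [mem_pointIdeal, ofBoolRing_mul]
    exact not_and_or.mp

def toPrimeSpectrum (x : X) : PrimeSpectrum (AsBoolRing (Clopens X)) :=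
  ⟨pointIdeal x, inferInstance⟩

theorem toPrimeSpectrum_preimage_basicOpen (A : AsBoolRing (Clopens X)) :
    toPrimeSpectrum ⁻¹' PrimeSpectrum.basicOpen A = ((ofBoolRing A : Clopens X) : Set X) :=
  Set.ext fun _ ↦ not_not

theorem mem_asIdeal_toPrimeSpectrum {x : X} {A : AsBoolRing (Clopens X)} :
    A ∈ (toPrimeSpectrum x).asIdeal ↔ x ∉ ofBoolRing A :=
  Iff.rfl

theorem continuous_toPrimeSpectrum : Continuous (toPrimeSpectrum (X := X)) :=
  PrimeSpectrum.isTopologicalBasis_basic_opens.continuous_iff.mpr <| by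
    rintro _ ⟨A, rfl⟩
    rw [toPrimeSpectrum_preimage_basicOpen]
    exact (ofBoolRing A : Clopens X).isClopen.isOpen

theorem denseRange_toPrimeSpectrum : DenseRange (toPrimeSpectrum (X := X)) := by
  refine PrimeSpectrum.isTopologicalBasis_basic_opens.dense_iff.mpr ?_
  rintro _ ⟨A, rfl⟩ hA
  have hA0 : A ≠ 0 := by
    rintro rfl
    simp [PrimeSpectrum.basicOpen_zero] at hA
  obtain ⟨x, hx⟩ : ((ofBoolRing A : Clopens X) : Set X).Nonempty := by
    rw [Set.nonempty_iff_ne_empty, ← coe_bot, SetLike.coe_injective.ne_iff, ← ofBoolRing_zero,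
      ofBoolRing.injective.ne_iff]
    exact hA0
  rw [← toPrimeSpectrum_preimage_basicOpen] at hx
  exact ⟨toPrimeSpectrum x, hx, x, rfl⟩

theorem toPrimeSpectrum_eq_iff {x y : X} :
    toPrimeSpectrum x = toPrimeSpectrum y ↔ y ∈ quasiComponent x := by
  rw [mem_quasiComponent_iff_forall_mem_iff, PrimeSpectrum.ext_iff, SetLike.ext_iff,
    ← toBoolRing.forall_congr_right]
  simp only [mem_asIdeal_toPrimeSpectrum, ofBoolRing_toBoolRing, not_iff_not]

end TopologicalSpace.Clopens

/-- Let `X` be a topological space and `R = Clop(X)` its Boolean ring of clopen sets.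
There is a map `f : π₀(X) → Spec R` sending the component of `x` to the prime ideal of
clopens not containing `x`; it is well defined and continuous; it is injective iff every
quasi-component of `X` is connected; and if `X` is quasi-compact it is surjective and
closed. -/
theorem pi0_to_spec_clopens (X : Type*) [TopologicalSpace X] :
    ∃ f : ConnectedComponents X → PrimeSpectrum (AsBoolRing (Clopens X)),
      (∀ x : X, ∀ A : AsBoolRing (Clopens X),
        A ∈ (f (ConnectedComponents.mk x)).asIdeal ↔ x ∉ (ofBoolRing A : Clopens X)) ∧
      Continuous f ∧
      (Function.Injective f ↔
        ∀ x : X, IsConnected (⋂₀ {A : Set X | IsClopen A ∧ x ∈ A})) ∧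
      (CompactSpace X → Function.Surjective f ∧ IsClosedMap f) := by
  have hcont := Clopens.continuous_toPrimeSpectrum (X := X)
  refine ⟨hcont.connectedComponentsLift, fun x A ↦ ?_, hcont.connectedComponentsLift_continuous,
    ?_, fun _ ↦ ?_⟩
  · rw [hcont.connectedComponentsLift_apply_coe, Clopens.mem_asIdeal_toPrimeSpectrum]
  · simp only [hcont.injective_connectedComponentsLift_iff, Clopens.toPrimeSpectrum_eq_iff]
    exact forall_congr' fun _ ↦ quasiComponent_subset_connectedComponent_iff
  · have hclosed := hcont.connectedComponentsLift_continuous.isClosedMap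
    have hdense : DenseRange hcont.connectedComponentsLift :=
      .of_comp (hcont.connectedComponentsLift_comp_coe ▸ Clopens.denseRange_toPrimeSpectrum)
    refine ⟨Set.range_eq_univ.mp ?_, hclosed⟩
    rw [← hclosed.isClosed_range.closure_eq, hdense.closure_range]
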